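/- arXiv:1702.01185 — 2 statements merged into one kernel-verified Lean document; each statement's English description precedes it below -/
import Mathlib

section
/- For every real t with 0 ≤ t < 3/(4+√6) there exists a constant D₁ > 0, depending only on t, such that the following holds. Let (X, μ) be a probability measure space, let ψ₁,…,ψ_n ∈ L²(μ) be orthonormal, let u ∈ L²(μ) with ‖u‖_{L²} > 0, let c̃ ∈ ℝⁿ and set ũ := ∑_{k=1}^n c̃_k ψ_k. Let D be a real N×n matrix with ‖DᵀD − I‖ ≤ t in the ℓ²-operator norm, let y ∈ ℝᴺ and η ≥ 0 satisfy ‖Dc̃ − y‖₂ ≤ η and η ≤ ‖u − ũ‖_{L²}, and let ĉ be any Basis Pursuit Denoising solution at level η, with û := ∑_{k=1}^n ĉ_k ψ_k. Then ‖u − û‖_{L²}/‖u‖_{L²} ≤ D₁·‖u − ũ‖_{L²}/‖u‖_{L²}. -/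
/-!
Both `ĉ` and `c̃` lie in the feasible set `{c : ‖Dc − y‖₂ ≤ η}`, so `‖D(ĉ − c̃)‖₂ ≤ 2η`, and the
lower isometry bound `(1 − t)‖c‖₂² ≤ ‖Dc‖₂²` turns this into `‖ĉ − c̃‖₂ ≤ 2η / √(1 − t)`.
Orthonormality of the `ψₖ` makes this the L² distance between `û` and `ũ`, so the triangle
inequality and `η ≤ ‖u − ũ‖` give the claim with `D₁ = 1 + 2 / √(1 − t)`.
-/

open MeasureTheory Matrix

/-- The ℓ¹-norm of a finitely supported real vector. -/
noncomputable def l1norm {ι : Type*} [Fintype ι] (x : ι → ℝ) : ℝ := ∑ i, |x i|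

/-- The ℓ²-norm of a finitely supported real vector. -/
noncomputable def l2norm {ι : Type*} [Fintype ι] (x : ι → ℝ) : ℝ := Real.sqrt (∑ i, (x i) ^ 2)

/-- `chat` is a Basis Pursuit Denoising solution at noise level `η`. -/
def IsBPDNSolution {ι κ : Type*} [Fintype ι] [Fintype κ]
    (D : Matrix ι κ ℝ) (y : ι → ℝ) (η : ℝ) (chat : κ → ℝ) : Prop :=
  l2norm (D.mulVec chat - y) ≤ η ∧
    ∀ c : κ → ℝ, l2norm (D.mulVec c - y) ≤ η → l1norm chat ≤ l1norm c

/-- The ℓ²-operator (spectral) norm of a square real matrix. -/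
noncomputable def opNorm {ι : Type*} [Fintype ι] [DecidableEq ι] (A : Matrix ι ι ℝ) : ℝ :=
  ‖LinearMap.toContinuousLinearMap (Matrix.toEuclideanLin A)‖

section l2norm

variable {ι : Type*} [Fintype ι]

lemma l2norm_eq_norm_toLp (x : ι → ℝ) : l2norm x = ‖WithLp.toLp 2 x‖ := by
  simp [l2norm, EuclideanSpace.norm_eq]

lemma l2norm_nonneg (x : ι → ℝ) : 0 ≤ l2norm x := Real.sqrt_nonneg _

lemma l2norm_sq (x : ι → ℝ) : l2norm x ^ 2 = x ⬝ᵥ x := by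
  rw [l2norm, Real.sq_sqrt (by positivity)]
  simp [dotProduct, sq]

lemma l2norm_sub_le (x y : ι → ℝ) : l2norm (x - y) ≤ l2norm x + l2norm y := by
  simpa only [l2norm_eq_norm_toLp, WithLp.toLp_sub] using norm_sub_le _ _

lemma l2norm_mulVec_le_opNorm [DecidableEq ι] (A : Matrix ι ι ℝ) (x : ι → ℝ) :
    l2norm (A *ᵥ x) ≤ opNorm A * l2norm x := by
  rw [l2norm_eq_norm_toLp, l2norm_eq_norm_toLp]
  exact (LinearMap.toContinuousLinearMap (toEuclideanLin A)).le_opNorm (WithLp.toLp 2 x)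

lemma abs_dotProduct_mulVec_le_opNorm [DecidableEq ι] (A : Matrix ι ι ℝ) (x : ι → ℝ) :
    |x ⬝ᵥ (A *ᵥ x)| ≤ opNorm A * l2norm x ^ 2 := by
  have hinner : x ⬝ᵥ (A *ᵥ x) = inner ℝ (WithLp.toLp 2 x) (WithLp.toLp 2 (A *ᵥ x)) := by
    rw [EuclideanSpace.inner_toLp_toLp, star_trivial, dotProduct_comm]
  calc |x ⬝ᵥ (A *ᵥ x)| ≤ l2norm x * l2norm (A *ᵥ x) := by
        simpa only [hinner, l2norm_eq_norm_toLp] using abs_real_inner_le_norm _ _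
    _ ≤ l2norm x * (opNorm A * l2norm x) :=
        mul_le_mul_of_nonneg_left (l2norm_mulVec_le_opNorm A x) (l2norm_nonneg x)
    _ = opNorm A * l2norm x ^ 2 := by ring

end l2norm

section isometry

variable {ι κ : Type*} [Fintype ι] [Fintype κ] [DecidableEq κ] {D : Matrix ι κ ℝ} {t : ℝ}

lemma one_sub_mul_l2norm_sq_le (hD : opNorm (Dᵀ * D - 1) ≤ t) (c : κ → ℝ) :
    (1 - t) * l2norm c ^ 2 ≤ l2norm (D *ᵥ c) ^ 2 := by
  have hgram : l2norm (D *ᵥ c) ^ 2 = l2norm c ^ 2 + c ⬝ᵥ ((Dᵀ * D - 1) *ᵥ c) := by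
    rw [l2norm_sq, l2norm_sq, sub_mulVec, one_mulVec, dotProduct_sub, ← mulVec_mulVec,
      dotProduct_mulVec c, vecMul_transpose]
    ring
  have hdev := abs_le.mp (abs_dotProduct_mulVec_le_opNorm (Dᵀ * D - 1) c)
  nlinarith [hdev.1, sq_nonneg (l2norm c)]

lemma l2norm_sub_le_of_feasible (hD : opNorm (Dᵀ * D - 1) ≤ t) (ht : t < 1) {y : ι → ℝ}
    {η : ℝ} {a b : κ → ℝ} (ha : l2norm (D *ᵥ a - y) ≤ η) (hb : l2norm (D *ᵥ b - y) ≤ η) :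
    l2norm (a - b) ≤ 2 * η / Real.sqrt (1 - t) := by
  have himage : l2norm (D *ᵥ (a - b)) ≤ 2 * η := by
    rw [show D *ᵥ (a - b) = (D *ᵥ a - y) - (D *ᵥ b - y) by rw [mulVec_sub]; abel]
    linarith [l2norm_sub_le (D *ᵥ a - y) (D *ᵥ b - y)]
  rw [le_div_iff₀ (Real.sqrt_pos.mpr (by linarith))]
  calc l2norm (a - b) * Real.sqrt (1 - t) = Real.sqrt ((1 - t) * l2norm (a - b) ^ 2) := by
        rw [Real.sqrt_mul' _ (sq_nonneg _), Real.sqrt_sq (l2norm_nonneg _), mul_comm]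
    _ ≤ Real.sqrt (l2norm (D *ᵥ (a - b)) ^ 2) :=
        Real.sqrt_le_sqrt (one_sub_mul_l2norm_sq_le hD (a - b))
    _ = l2norm (D *ᵥ (a - b)) := Real.sqrt_sq (l2norm_nonneg _)
    _ ≤ 2 * η := himage

end isometry

section orthonormal

variable {ι E : Type*} [Fintype ι] [NormedAddCommGroup E] [InnerProductSpace ℝ E] {ψ : ι → E}

lemma Orthonormal.norm_sum_smul_eq_l2norm (hψ : Orthonormal ℝ ψ) (a : ι → ℝ) :
    ‖∑ k, a k • ψ k‖ = l2norm a := by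
  rw [l2norm, ← Real.sqrt_sq (norm_nonneg _), ← real_inner_self_eq_norm_sq, hψ.inner_sum]
  simp [sq]

lemma Orthonormal.norm_sub_sum_smul_le (hψ : Orthonormal ℝ ψ) (u : E) (a b : ι → ℝ) :
    ‖u - ∑ k, a k • ψ k‖ ≤ ‖u - ∑ k, b k • ψ k‖ + l2norm (a - b) := by
  have hdiff : ∑ k, a k • ψ k - ∑ k, b k • ψ k = ∑ k, (a - b) k • ψ k := by
    simp only [Pi.sub_apply, sub_smul, Finset.sum_sub_distrib]
  calc ‖u - ∑ k, a k • ψ k‖ = ‖(u - ∑ k, b k • ψ k) - (∑ k, a k • ψ k - ∑ k, b k • ψ k)‖ := by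
        congr 1; abel
    _ ≤ ‖u - ∑ k, b k • ψ k‖ + l2norm (a - b) := by
        rw [hdiff, ← hψ.norm_sum_smul_eq_l2norm]
        exact norm_sub_le _ _

end orthonormal

/-- Corollary 4.8 (non-sparse recovery), deterministic content: under the isometry condition
`‖DᵀD − I‖ ≤ t < 3/(4+√6)`, the relative L² error of the BPDN surrogate is controlled by the
relative truncation error, with no sparsity assumption. -/
theorem non_sparse_recovery_rrmse :
    ∀ t : ℝ, 0 ≤ t → t < 3 / (4 + Real.sqrt 6) →
    ∃ D₁ : ℝ, 0 < D₁ ∧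
      ∀ (X : Type) (_ : MeasurableSpace X) (μ : Measure X), IsProbabilityMeasure μ →
      ∀ (n N : ℕ),
      ∀ ψ : Fin n → Lp ℝ 2 μ, Orthonormal ℝ ψ →
      ∀ u : Lp ℝ 2 μ, 0 < ‖u‖ →
      ∀ ctil : Fin n → ℝ,
      ∀ D : Matrix (Fin N) (Fin n) ℝ, opNorm (Dᵀ * D - 1) ≤ t →
      ∀ (y : Fin N → ℝ) (η : ℝ), 0 ≤ η →
        l2norm (D.mulVec ctil - y) ≤ η →
        η ≤ ‖u - ∑ k, ctil k • ψ k‖ →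
      ∀ chat : Fin n → ℝ, IsBPDNSolution D y η chat →
        ‖u - ∑ k, chat k • ψ k‖ / ‖u‖ ≤ D₁ * ‖u - ∑ k, ctil k • ψ k‖ / ‖u‖ := by
  intro t _ ht
  have ht1 : t < 1 := ht.trans_le <| (div_le_one (by positivity)).mpr <| by
    linarith [Real.sqrt_nonneg 6]
  refine ⟨1 + 2 / Real.sqrt (1 - t), by positivity, ?_⟩
  intro X _ μ _ n N ψ hψ u _ ctil D hD y η _ hfeas hηE chat hchat
  gcongr ?_ / _
  calc ‖u - ∑ k, chat k • ψ k‖ ≤ ‖u - ∑ k, ctil k • ψ k‖ + l2norm (chat - ctil) :=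
        hψ.norm_sub_sum_smul_le u chat ctil
    _ ≤ ‖u - ∑ k, ctil k • ψ k‖ + 2 * η / Real.sqrt (1 - t) := by
        gcongr
        exact l2norm_sub_le_of_feasible hD ht1 hchat.1 hfeas
    _ ≤ ‖u - ∑ k, ctil k • ψ k‖ + 2 * ‖u - ∑ k, ctil k • ψ k‖ / Real.sqrt (1 - t) := by
        gcongr
    _ = (1 + 2 / Real.sqrt (1 - t)) * ‖u - ∑ k, ctil k • ψ k‖ := by ring
end

section
/- For all real B > 0, α > 0 and E > 0 there exists ν ≥ 0, depending only on B, α and E, such that the following holds: for every integer d ≥ 1, every real Hilbert space H, every orthonormal family (ψ_i)_{i ∈ ℕᵈ} in H indexed by multi-indices, every square-summable family of coefficients (c_i)_{i ∈ ℕᵈ} with |c_i| ≤ B·exp(−α·∑_{k=1}^d k²·i_k) for every i, and with u := ∑_i c_i ψ_i (the sum converging in H) satisfying ‖u‖² ≥ E, and every ε ∈ (0, 0.9), there exists a real M ≥ 0 such that the index set 𝔅 := {i ∈ ℕᵈ : ∑_{k=1}^d k²·i_k ≤ M} is finite with cardinality at most ε^{−ν}, and ‖u − ∑_{i∈𝔅}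 c_i ψ_i‖ ≤ ε·‖u‖. -/
/-!
Write `g i = exp (-α S(i))`. Since `S` is additive in the coordinates, `∑ᵢ g i` factors as
`∏ₖ (1 - e^{-α(k+1)²})⁻¹`, which is at most `D = exp (q / (1 - q)²)`, `q = e^{-α}`, whatever `d`.
Truncate at the level set `{g ≥ δ} = {S ≤ -log δ / α}`: Markov's inequality bounds its size by
`D / δ`, and Parseval, with `c i ² ≤ B² g i ² ≤ B² δ g i` off the level set, bounds the squared
error by `B² δ D`. For `δ = ε² η` with a constant `η` the error is at most `ε ‖u‖`, and the size
`(D / η) ε⁻²` is at most `ε^{-ν}` because `ε < 0.9` stays away from `1`.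
-/

/-- The weighted total order `S(i) = ∑_{k=1}^d k²·i_k` of a multi-index `i ∈ ℕᵈ`
(with `k` ranging over `1,…,d`). -/
def weightedOrder {d : ℕ} (i : Fin d → ℕ) : ℕ := ∑ k : Fin d, ((k : ℕ) + 1) ^ 2 * i k

open Finset Real

section Orthonormal

variable {ι H : Type*} [NormedAddCommGroup H] [InnerProductSpace ℝ H] {ψ : ι → H} {c : ι → ℝ}

theorem Orthonormal.norm_sum_smul_sq (hψ : Orthonormal ℝ ψ) (s : Finset ι) :
    ‖∑ i ∈ s, c i • ψ i‖ ^ 2 = ∑ i ∈ s, c i ^ 2 := by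
  rw [← real_inner_self_eq_norm_sq, hψ.inner_sum]
  simp [sq]

theorem Orthonormal.hasSum_sq_of_hasSum (hψ : Orthonormal ℝ ψ) {u : H}
    (hu : HasSum (fun i => c i • ψ i) u) : HasSum (fun i => c i ^ 2) (‖u‖ ^ 2) := by
  simpa only [HasSum, hψ.norm_sum_smul_sq] using (hu.norm).pow 2

theorem Orthonormal.norm_sub_sum_sq_le_tsum (hψ : Orthonormal ℝ ψ) {u : H}
    (hu : HasSum (fun i => c i • ψ i) u) (s : Finset ι) {g : ι → ℝ} (hg0 : ∀ i, 0 ≤ g i)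
    (hg : Summable g) (hcg : ∀ i ∉ s, c i ^ 2 ≤ g i) :
    ‖u - ∑ i ∈ s, c i • ψ i‖ ^ 2 ≤ ∑' i, g i := by
  have htail : HasSum (fun j : {i // i ∉ s} => c j • ψ j) (u - ∑ i ∈ s, c i • ψ i) :=
    (s.hasSum_compl_iff (f := fun i => c i • ψ i)).2 (by rwa [sub_add_cancel])
  calc ‖u - ∑ i ∈ s, c i • ψ i‖ ^ 2 ≤ ∑' j : {i // i ∉ s}, g j :=
        hasSum_le (fun j : {i // i ∉ s} => hcg j j.2)
          ((hψ.comp _ Subtype.val_injective).hasSum_sq_of_hasSum htail) (hg.subtype _).hasSum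
    _ ≤ ∑' i, g i := hg.tsum_subtype_le g {i | i ∉ s} hg0

end Orthonormal

section Markov

variable {ι : Type*} {g : ι → ℝ} {δ : ℝ}

theorem Summable.finite_setOf_le (hg : Summable g) (hδ : 0 < δ) : {i | δ ≤ g i}.Finite := by
  simpa only [not_lt] using Filter.eventually_cofinite.1 (hg.tendsto_cofinite_zero.eventually
    (gt_mem_nhds hδ))

theorem card_mul_le_tsum (hg0 : ∀ i, 0 ≤ g i) (hg : Summable g) (s : Finset ι)
    (hs : ∀ i ∈ s, δ ≤ g i) : s.card * δ ≤ ∑' i, g i :=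
  calc (s.card : ℝ) * δ = s.card • δ := (nsmul_eq_mul _ _).symm
    _ ≤ ∑ i ∈ s, g i := card_nsmul_le_sum s g δ hs
    _ ≤ ∑' i, g i := hg.sum_le_tsum s fun i _ => hg0 i

end Markov

theorem sum_prod_pow_le_prod_inv_one_sub {κ : Type*} [Fintype κ] {r : κ → ℝ}
    (hr0 : ∀ k, 0 ≤ r k) (hr1 : ∀ k, r k < 1) (t : Finset (κ → ℕ)) :
    ∑ i ∈ t, ∏ k, r k ^ i k ≤ ∏ k, (1 - r k)⁻¹ := by
  classical
  have ht : t ⊆ Fintype.piFinset fun k => t.image (· k) := fun i hi =>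
    Fintype.mem_piFinset.2 fun k => mem_image_of_mem _ hi
  calc ∑ i ∈ t, ∏ k, r k ^ i k
      ≤ ∑ i ∈ Fintype.piFinset (fun k => t.image (· k)), ∏ k, r k ^ i k :=
        sum_le_sum_of_subset_of_nonneg ht fun _ _ _ => prod_nonneg fun k _ => pow_nonneg (hr0 k) _
    _ = ∏ k, ∑ j ∈ t.image (· k), r k ^ j := (prod_univ_sum _ _).symm
    _ ≤ ∏ k, (1 - r k)⁻¹ := by
      refine prod_le_prod (fun k _ => sum_nonneg fun j _ => pow_nonneg (hr0 k) j) fun k _ => ?_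
      rw [← tsum_geometric_of_lt_one (hr0 k) (hr1 k)]
      exact (summable_geometric_of_lt_one (hr0 k) (hr1 k)).sum_le_tsum _
        fun j _ => pow_nonneg (hr0 k) j

theorem inv_one_sub_le_exp_div {r : ℝ} (hr : r < 1) : (1 - r)⁻¹ ≤ exp (r / (1 - r)) := by
  have h : (1 - r)⁻¹ = r / (1 - r) + 1 := by
    field_simp [(sub_pos.2 hr).ne']
    ring
  rw [h]
  exact add_one_le_exp _

theorem sum_pow_succ_le_div_one_sub {q : ℝ} (hq0 : 0 ≤ q) (hq1 : q < 1) (d : ℕ) :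
    ∑ k : Fin d, q ^ ((k : ℕ) + 1) ≤ q / (1 - q) := by
  rw [Fin.sum_univ_eq_sum_range (fun k => q ^ (k + 1)), range_eq_Ico]
  simpa only [sum_Ico_add', pow_one] using geom_sum_Ico_le_of_lt_one (m := 1) (n := d + 1) hq0 hq1

noncomputable def expWeightSumBound (α : ℝ) : ℝ := exp (exp (-α) / (1 - exp (-α)) ^ 2)

theorem one_le_expWeightSumBound (α : ℝ) : 1 ≤ expWeightSumBound α :=
  one_le_exp (div_nonneg (exp_pos _).le (sq_nonneg _))

section WeightedOrder

variable {d : ℕ} {α : ℝ}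

theorem exp_neg_mul_weightedOrder (i : Fin d → ℕ) :
    exp (-α * weightedOrder i) = ∏ k : Fin d, exp (-α * ((k : ℝ) + 1) ^ 2) ^ i k := by
  simp_rw [← exp_nat_mul, ← exp_sum, weightedOrder]
  push_cast
  rw [mul_sum]
  congr 1
  exact sum_congr rfl fun k _ => by ring

theorem prod_inv_one_sub_exp_le (hα : 0 < α) :
    ∏ k : Fin d, (1 - exp (-α * ((k : ℝ) + 1) ^ 2))⁻¹ ≤ expWeightSumBound α := by
  set q := exp (-α)
  have hq0 : 0 < q := exp_pos _
  have hq1 : q < 1 := exp_lt_one_iff.2 (neg_neg_of_pos hα)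
  have hr : ∀ k : Fin d, exp (-α * ((k : ℝ) + 1) ^ 2) ≤ q ^ ((k : ℕ) + 1) := fun k => by
    rw [← exp_nat_mul, exp_le_exp]
    push_cast
    have hk : (0 : ℝ) ≤ (k : ℕ) := Nat.cast_nonneg _
    nlinarith [mul_nonneg hα.le (mul_nonneg hk (by linarith : (0 : ℝ) ≤ (k : ℕ) + 1))]
  have hrq : ∀ k : Fin d, exp (-α * ((k : ℝ) + 1) ^ 2) ≤ q := fun k =>
    (hr k).trans (pow_le_of_le_one hq0.le hq1.le (Nat.succ_ne_zero _))
  calc ∏ k : Fin d, (1 - exp (-α * ((k : ℝ) + 1) ^ 2))⁻¹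
      ≤ ∏ k : Fin d, exp (q ^ ((k : ℕ) + 1) / (1 - q)) := by
        refine prod_le_prod (fun k _ => inv_nonneg.2 (by linarith [hrq k])) fun k _ => ?_
        refine (inv_one_sub_le_exp_div ((hrq k).trans_lt hq1)).trans (exp_le_exp.2 ?_)
        exact div_le_div₀ (by positivity) (hr k) (by linarith) (by linarith [hrq k])
    _ = exp ((∑ k : Fin d, q ^ ((k : ℕ) + 1)) / (1 - q)) := by rw [← exp_sum, sum_div]
    _ ≤ expWeightSumBound α := by
        rw [expWeightSumBound, exp_le_exp, sq, ← div_div]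
        gcongr
        exact sum_pow_succ_le_div_one_sub hq0.le hq1 d

theorem sum_exp_neg_mul_weightedOrder_le (hα : 0 < α) (t : Finset (Fin d → ℕ)) :
    ∑ i ∈ t, exp (-α * weightedOrder i) ≤ expWeightSumBound α := by
  simp_rw [exp_neg_mul_weightedOrder]
  refine (sum_prod_pow_le_prod_inv_one_sub (fun _ => (exp_pos _).le) (fun k => ?_) t).trans
    (prod_inv_one_sub_exp_le hα)
  exact exp_lt_one_iff.2 (mul_neg_of_neg_of_pos (neg_neg_of_pos hα) (by positivity))

theorem summable_exp_neg_mul_weightedOrder (hα : 0 < α) :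
    Summable fun i : Fin d → ℕ => exp (-α * weightedOrder i) :=
  summable_of_sum_le (fun _ => (exp_pos _).le) (sum_exp_neg_mul_weightedOrder_le hα)

theorem tsum_exp_neg_mul_weightedOrder_le (hα : 0 < α) :
    ∑' i : Fin d → ℕ, exp (-α * weightedOrder i) ≤ expWeightSumBound α :=
  Real.tsum_le_of_sum_le (fun _ => (exp_pos _).le) (sum_exp_neg_mul_weightedOrder_le hα)

theorem weightedOrder_le_iff {δ : ℝ} (hα : 0 < α) (hδ : 0 < δ) (i : Fin d → ℕ) :
    (weightedOrder i : ℝ) ≤ -log δ / α ↔ δ ≤ exp (-α * weightedOrder i) := by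
  rw [le_div_iff₀ hα, ← log_le_iff_le_exp hδ]
  constructor <;> intro h <;> linarith

end WeightedOrder

theorem exists_truncation_weightedOrder_le {H : Type*} [NormedAddCommGroup H]
    [InnerProductSpace ℝ H] {d : ℕ} {ψ : (Fin d → ℕ) → H} (hψ : Orthonormal ℝ ψ)
    {c : (Fin d → ℕ) → ℝ} {B α δ : ℝ} (hα : 0 < α) (hδ : 0 < δ)
    (hc : ∀ i, |c i| ≤ B * exp (-α * weightedOrder i)) {u : H}
    (hu : HasSum (fun i => c i • ψ i) u) :
    ∃ hfin : {i : Fin d → ℕ | (weightedOrder i : ℝ) ≤ -log δ / α}.Finite,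
      (hfin.toFinset.card : ℝ) * δ ≤ expWeightSumBound α ∧
        ‖u - ∑ i ∈ hfin.toFinset, c i • ψ i‖ ^ 2 ≤ B ^ 2 * δ * expWeightSumBound α := by
  set g : (Fin d → ℕ) → ℝ := fun i => exp (-α * weightedOrder i)
  have hg0 : ∀ i, 0 ≤ g i := fun i => (exp_pos _).le
  have hg := summable_exp_neg_mul_weightedOrder (d := d) hα
  have hfin : {i : Fin d → ℕ | (weightedOrder i : ℝ) ≤ -log δ / α}.Finite :=
    (hg.finite_setOf_le hδ).subset fun i hi => (weightedOrder_le_iff hα hδ i).1 hi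
  refine ⟨hfin, ?_, ?_⟩
  · refine (card_mul_le_tsum hg0 hg _ fun i hi => ?_).trans
      (tsum_exp_neg_mul_weightedOrder_le hα)
    exact (weightedOrder_le_iff hα hδ i).1 (hfin.mem_toFinset.1 hi)
  · have hcg : ∀ i ∉ hfin.toFinset, c i ^ 2 ≤ B ^ 2 * δ * g i := fun i hi => by
      have hgδ : g i < δ := not_le.1 fun h =>
        hi (hfin.mem_toFinset.2 ((weightedOrder_le_iff hα hδ i).2 h))
      calc c i ^ 2 = |c i| ^ 2 := (sq_abs _).symm
        _ ≤ (B * g i) ^ 2 := pow_le_pow_left₀ (abs_nonneg _) (hc i) 2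
        _ = B ^ 2 * g i * g i := by ring
        _ ≤ B ^ 2 * δ * g i := by gcongr
    calc ‖u - ∑ i ∈ hfin.toFinset, c i • ψ i‖ ^ 2 ≤ ∑' i, B ^ 2 * δ * g i :=
          hψ.norm_sub_sum_sq_le_tsum hu _ (fun i => by positivity) (hg.mul_left _) hcg
      _ = B ^ 2 * δ * ∑' i, g i := tsum_mul_left
      _ ≤ B ^ 2 * δ * expWeightSumBound α := by
          gcongr
          exact tsum_exp_neg_mul_weightedOrder_le hα

theorem le_rpow_neg_log_div_log {C ε a : ℝ} (hC : 1 ≤ C) (hε : 0 < ε) (ha : 1 < a)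
    (hεa : ε ≤ a⁻¹) : C ≤ ε ^ (-(log C / log a)) := by
  have hlog : log a ≤ -log ε := by
    have h := log_le_log hε hεa
    rw [log_inv] at h
    linarith
  have h1 : 1 ≤ -log ε / log a := (one_le_div (log_pos ha)).2 hlog
  rw [rpow_def_of_pos hε, ← log_le_iff_le_exp (by linarith)]
  calc log C = log C * 1 := (mul_one _).symm
    _ ≤ log C * (-log ε / log a) := mul_le_mul_of_nonneg_left h1 (log_nonneg hC)
    _ = log ε * -(log C / log a) := by ring

/-- Lemma 4.6: for a quantity of interest with exponentially decaying polynomial chaos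
coefficients, there is `ν ≥ 0`, depending only on `B`, `α` and the lower bound `E` on
`‖u‖²`, such that for every `ε ∈ (0, 0.9)` there is an anisotropic order basis
`𝔅 = {i : S(i) ≤ M}` of cardinality at most `ε^{−ν}` whose best approximation has relative
error at most `ε`; both bounds are independent of the dimension `d`. -/
theorem anisotropic_basis_dimension_independent :
    ∀ B α E : ℝ, 0 < B → 0 < α → 0 < E →
    ∃ ν : ℝ, 0 ≤ ν ∧
      ∀ d : ℕ, 1 ≤ d →
      ∀ (H : Type) [NormedAddCommGroup H] [InnerProductSpace ℝ H],
      ∀ ψ : (Fin d → ℕ) → H, Orthonormal ℝ ψ →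
      ∀ c : (Fin d → ℕ) → ℝ, Summable (fun i => (c i) ^ 2) →
      (∀ i : Fin d → ℕ, |c i| ≤ B * Real.exp (-α * (weightedOrder i : ℝ))) →
      ∀ u : H, HasSum (fun i => c i • ψ i) u → E ≤ ‖u‖ ^ 2 →
      ∀ ε : ℝ, 0 < ε → ε < 0.9 →
      ∃ M : ℝ, 0 ≤ M ∧
        ∃ hfin : {i : Fin d → ℕ | (weightedOrder i : ℝ) ≤ M}.Finite,
          (hfin.toFinset.card : ℝ) ≤ ε ^ (-ν) ∧
            ‖u - ∑ i ∈ hfin.toFinset, c i • ψ i‖ ≤ ε * ‖u‖ := by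
  intro B α E hB hα hE
  set D := expWeightSumBound α
  have hD : 1 ≤ D := one_le_expWeightSumBound α
  set η := min 1 (E / (B ^ 2 * D))
  have hη : 0 < η := lt_min one_pos (by positivity)
  have hηE : B ^ 2 * D * η ≤ E := by
    calc B ^ 2 * D * η ≤ B ^ 2 * D * (E / (B ^ 2 * D)) := by gcongr; exact min_le_right _ _
      _ = E := mul_div_cancel₀ _ (by positivity)
  have hDη : 1 ≤ D / η := (one_le_div hη).2 (hD.trans' (min_le_left _ _))
  refine ⟨log (D / η) / log (10 / 9) + 2,
    add_nonneg (div_nonneg (log_nonneg hDη) (log_nonneg (by norm_num))) zero_le_two, ?_⟩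
  intro d _ H _ _ ψ hψ c _ hc u hu hEu ε hε hε9
  have hε1 : ε ≤ (10 / 9)⁻¹ := by norm_num at hε9 ⊢; linarith
  have hδ : 0 < ε ^ 2 * η := by positivity
  obtain ⟨hfin, hcard, herr⟩ := exists_truncation_weightedOrder_le hψ hα hδ hc hu
  refine ⟨-log (ε ^ 2 * η) / α, ?_, hfin, ?_, ?_⟩
  · refine div_nonneg (neg_nonneg.2 (log_nonpos hδ.le ?_)) hα.le
    exact mul_le_one₀ (pow_le_one₀ hε.le (by linarith)) hη.le (min_le_left _ _)
  · rw [neg_add, rpow_add hε, rpow_neg hε.le 2, rpow_two, ← div_eq_mul_inv,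
      le_div_iff₀ (by positivity)]
    calc (hfin.toFinset.card : ℝ) * ε ^ 2 = hfin.toFinset.card * (ε ^ 2 * η) / η := by
          rw [mul_div_assoc, mul_div_cancel_right₀ _ hη.ne']
      _ ≤ D / η := by gcongr
      _ ≤ _ := le_rpow_neg_log_div_log hDη hε (by norm_num) hε1
  · refine le_of_pow_le_pow_left₀ two_ne_zero (by positivity) ?_
    calc ‖u - ∑ i ∈ hfin.toFinset, c i • ψ i‖ ^ 2 ≤ B ^ 2 * (ε ^ 2 * η) * D := herr
      _ = ε ^ 2 * (B ^ 2 * D * η) := by ring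
      _ ≤ ε ^ 2 * ‖u‖ ^ 2 := by gcongr; exact hηE.trans hEu
      _ = (ε * ‖u‖) ^ 2 := by ring
end
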